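/- Projection lemma for the regularised learning functional: Let H_K be the RKHS of an operator-valued positive semidefinite kernel, x₁,…,x_{l+u} ∈ X, I(f) = (1/l) Σ_{j=1}^{l} V_{x_j}(y_j, C_{x_j} f(x_j)) + γ_A ‖f‖²_{H_K} + γ_I ⟨f̄, M f̄⟩, where f̄ = (f(x₁),…,f(x_{l+u})), M is a positive semidefinite operator, γ_A > 0, γ_I ≥ 0, and P is the orthogonal projection of H_K onto the closure of H_{K,x} = span{ K_{x_i} w : w ∈ W_{x_i}, 1 ≤ i ≤ l+u }. Then I(P f) ≤ I(f) for every f ∈ H_K. -/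

import Mathlib

/-!
Every kernel section `K_{x_i} w` lies in the subspace onto which `P` projects, so
`⟪K_{x_i} w, P f⟫ = ⟪K_{x_i} w, f⟫`, i.e. `K_{x_i}* (P f) = K_{x_i}* f`. Hence the data term and
the manifold term of `I` see the same values `f(x_i)` for `P f` and for `f`, while the
regulariser can only decrease because `‖P f‖ ≤ ‖f‖`.
-/

open scoped RealInnerProductSpace

variable {l u : ℕ}

/-- The regularised learning functional
`I(f) = (1/l) Σ_j V_j(y_j, C_j f(x_j)) + γ_A ‖f‖² + γ_I ⟨f̄, M f̄⟩`, where the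
evaluation at the input point `x_i` is `f(x_i) = K_{x_i}* f` and
`f̄ = (f(x_1),…,f(x_{l+u}))`. -/
noncomputable def lossI {HK : Type} [NormedAddCommGroup HK] [InnerProductSpace ℝ HK]
    [CompleteSpace HK]
    (Wb : Fin (l + u) → Type) [∀ i, NormedAddCommGroup (Wb i)]
    [∀ i, InnerProductSpace ℝ (Wb i)] [∀ i, CompleteSpace (Wb i)]
    (Yb : Fin l → Type) [∀ j, NormedAddCommGroup (Yb j)] [∀ j, InnerProductSpace ℝ (Yb j)]
    (Kx : ∀ i, Wb i →L[ℝ] HK)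
    (C : ∀ j : Fin l, Wb (Fin.castAdd u j) →L[ℝ] Yb j)
    (y : ∀ j : Fin l, Yb j)
    (V : ∀ j : Fin l, Yb j → Yb j → ℝ)
    (M : PiLp 2 Wb →L[ℝ] PiLp 2 Wb)
    (γA γI : ℝ) (f : HK) : ℝ :=
  (1 / (l : ℝ)) * ∑ j : Fin l, V j (y j) (C j ((Kx (Fin.castAdd u j)).adjoint f))
    + γA * ‖f‖ ^ 2
    + γI * ⟪(WithLp.equiv 2 (∀ i, Wb i)).symm (fun i => (Kx i).adjoint f),
        M ((WithLp.equiv 2 (∀ i, Wb i)).symm (fun i => (Kx i).adjoint f))⟫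

theorem ContinuousLinearMap.adjoint_starProjection_apply_of_apply_mem {𝕜 E F : Type*} [RCLike 𝕜]
    [NormedAddCommGroup E] [InnerProductSpace 𝕜 E] [CompleteSpace E]
    [NormedAddCommGroup F] [InnerProductSpace 𝕜 F] [CompleteSpace F]
    {K : Submodule 𝕜 E} [K.HasOrthogonalProjection] {T : F →L[𝕜] E}
    (hT : ∀ w, T w ∈ K) (v : E) :
    T.adjoint (K.starProjection v) = T.adjoint v := by
  refine ext_inner_left 𝕜 fun w => ?_
  rw [adjoint_inner_right, adjoint_inner_right, ← Submodule.inner_starProjection_left_eq_right,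
    K.starProjection_eq_self_iff.mpr (hT w)]

theorem lossI_le_of_adjoint_eq_of_norm_le {HK : Type} [NormedAddCommGroup HK]
    [InnerProductSpace ℝ HK] [CompleteSpace HK]
    (Wb : Fin (l + u) → Type) [∀ i, NormedAddCommGroup (Wb i)]
    [∀ i, InnerProductSpace ℝ (Wb i)] [∀ i, CompleteSpace (Wb i)]
    (Yb : Fin l → Type) [∀ j, NormedAddCommGroup (Yb j)] [∀ j, InnerProductSpace ℝ (Yb j)]
    (Kx : ∀ i, Wb i →L[ℝ] HK) (C : ∀ j : Fin l, Wb (Fin.castAdd u j) →L[ℝ] Yb j)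
    (y : ∀ j : Fin l, Yb j) (V : ∀ j : Fin l, Yb j → Yb j → ℝ) (M : PiLp 2 Wb →L[ℝ] PiLp 2 Wb)
    {γA : ℝ} (hγA : 0 ≤ γA) (γI : ℝ) {g f : HK}
    (hgf : ∀ i, (Kx i).adjoint g = (Kx i).adjoint f) (hnorm : ‖g‖ ≤ ‖f‖) :
    lossI Wb Yb Kx C y V M γA γI g ≤ lossI Wb Yb Kx C y V M γA γI f := by
  have hreg : γA * ‖g‖ ^ 2 ≤ γA * ‖f‖ ^ 2 := by gcongr
  simp only [lossI, hgf]
  linarith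

theorem lossI_orthogonalProjection_le {HK : Type} [NormedAddCommGroup HK]
    [InnerProductSpace ℝ HK] [CompleteSpace HK]
    (Wb : Fin (l + u) → Type) [∀ i, NormedAddCommGroup (Wb i)]
    [∀ i, InnerProductSpace ℝ (Wb i)] [∀ i, CompleteSpace (Wb i)]
    (Yb : Fin l → Type) [∀ j, NormedAddCommGroup (Yb j)] [∀ j, InnerProductSpace ℝ (Yb j)]
    (Kx : ∀ i, Wb i →L[ℝ] HK)
    (C : ∀ j : Fin l, Wb (Fin.castAdd u j) →L[ℝ] Yb j)
    (y : ∀ j : Fin l, Yb j)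
    (V : ∀ j : Fin l, Yb j → Yb j → ℝ)
    (M : PiLp 2 Wb →L[ℝ] PiLp 2 Wb)
    (γA γI : ℝ) (hγA : 0 < γA) (f : HK) :
    lossI Wb Yb Kx C y V M γA γI
        (((Submodule.span ℝ (⋃ i, Set.range (Kx i))).topologicalClosure.subtypeL)
          (Submodule.orthogonalProjection
            (Submodule.span ℝ (⋃ i, Set.range (Kx i))).topologicalClosure f)) ≤
      lossI Wb Yb Kx C y V M γA γI f := by
  set S := (Submodule.span ℝ (⋃ i, Set.range (Kx i))).topologicalClosure
  have hKx_mem : ∀ i w, Kx i w ∈ S := fun i w =>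
    Submodule.le_topologicalClosure _ <| Submodule.subset_span <| Set.mem_iUnion.2 ⟨i, w, rfl⟩
  exact lossI_le_of_adjoint_eq_of_norm_le Wb Yb Kx C y V M hγA.le γI
    (fun i => (Kx i).adjoint_starProjection_apply_of_apply_mem (hKx_mem i) f)
    (S.norm_starProjection_apply_le f)
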